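/- arXiv:1002.3601 — 4 statements merged into one kernel-verified Lean document; each statement's English description precedes it below -/
import Mathlib

section
/- Define f_d(i,0,x) := ∑_{k=0}^{d-1} C_{d-1-k}·binom(d+i-1-k,k)·(1-x)^k·x^{d-k} for natural numbers d ≥ 1 and i ≥ 0, where C_n is the n-th Catalan number. Then for all i ≥ 1, these polynomials satisfy the recursion f_d(i,0,x) = f_d(i-1,0,x) - (x-1)·f_{d-1}(i-1,0,x) (for d ≥ 2). -/
open Polynomial Finset

/-- `f_d(i,0,x) = ∑_{k=0}^{d-1} C_{d-1-k}·binom(d+i-1-k,k)·(1-x)^k·x^{d-k}`. -/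
noncomputable def fdi0 (d i : ℕ) : Polynomial ℤ :=
  ∑ k ∈ Finset.range d,
    C ((catalan (d - 1 - k) * (d + i - 1 - k).choose k : ℕ) : ℤ) * (1 - X) ^ k * X ^ (d - k)

/-- Pascal's rule applied termwise; the `k = 0` terms of `f_{d+1}(j+1)` and `f_{d+1}(j)` agree. -/
theorem fdi0_succ_succ (d j : ℕ) :
    fdi0 (d + 1) (j + 1) = fdi0 (d + 1) j + (1 - X) * fdi0 d j := by
  unfold fdi0
  rw [sum_range_succ', sum_range_succ', mul_sum, add_right_comm _ _ (∑ i ∈ range d, _),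
    ← sum_add_distrib]
  refine congrArg₂ (· + ·) (sum_congr rfl fun m hm => ?_) (by simp)
  have hmd : m < d := mem_range.mp hm
  have hcat : d + 1 - 1 - (m + 1) = d - 1 - m := by omega
  have hpow : d + 1 - (m + 1) = d - m := by omega
  have hleft : d + 1 + (j + 1) - 1 - (m + 1) = (d + j - 1 - m) + 1 := by omega
  have hright : d + 1 + j - 1 - (m + 1) = d + j - 1 - m := by omega
  rw [hcat, hpow, hleft, hright, Nat.choose_succ_succ']
  simp only [Nat.cast_mul, Nat.cast_add, map_mul, map_add]
  ring

theorem stmt2_general (d i : ℕ) (hi : 1 ≤ i) :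
    fdi0 d i = fdi0 d (i - 1) - (X - 1) * fdi0 (d - 1) (i - 1) := by
  obtain ⟨j, rfl⟩ : ∃ j, i = j + 1 := ⟨i - 1, by omega⟩
  rcases d with _ | d
  · simp [fdi0]
  · rw [fdi0_succ_succ]
    simp only [Nat.add_sub_cancel]
    ring

/-- The recursion `f_d(i,0,x) = f_d(i-1,0,x) - (x-1)·f_{d-1}(i-1,0,x)`. -/
theorem stmt2 (d i : ℕ) (hd : 2 ≤ d) (hi : 1 ≤ i) :
    fdi0 d i = fdi0 d (i - 1) - (X - 1) * fdi0 (d - 1) (i - 1) :=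
  stmt2_general d i hi
end

section
/- Define f_d(i,j,x) := ∑_{k=0}^{d-1} C_{d-1-k}·(1-x)^k·x^{d-k}·∑_{s=0}^{j} binom(j,s)·binom(d+i+j-1-k-s,k-s) for natural numbers d ≥ 1, i, j ≥ 0, where C_n is the n-th Catalan number and binom(a,b)=0 when b is negative or b > a. Then for all j ≥ 1 and d ≥ 2, these polynomials satisfy the recursion f_d(i,j,x) = f_d(i,j-1,x) - 2(x-1)·f_{d-1}(i,j-1,x). -/
/-!
Write the inner sum as `∑ₛ binom(j,s)·b(N,k,s)` with `b(N,k,s) = binom(N-s,k-s)`. Pascal's rule for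
`binom(j+1,s)` turns the inner sum for `j+1` into `∑ₛ binom(j,s)·(b(N+1,k+1,s) + b(N+1,k+1,s+1))`;
here `b(N+1,k+1,s+1) = b(N,k,s)` and Pascal's rule once more gives
`b(N+1,k+1,s) = b(N,k+1,s) + b(N,k,s)`. Hence the `(k+1)`-st inner sum for `(d, j+1)` is the
`(k+1)`-st one for `(d, j)` plus twice the `k`-th one for `(d-1, j)`, while the `0`-th inner sum is
always `1`. Since `(1-x)^(k+1)·x^(d-k-1) = -(x-1)·(1-x)^k·x^((d-1)-k)` and the Catalan factors
`C_{d-1-(k+1)} = C_{(d-1)-1-k}` agree, the recursion holds term by term.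
-/

open Polynomial Finset

/-- Inner sum `∑_{s=0}^{j} binom(j,s)·binom(d+i+j-1-k-s,k-s)`, where binomial
coefficients with negative lower index are interpreted as zero. -/
def innerSum (d i j k : ℕ) : ℕ :=
  ∑ s ∈ Finset.range (j + 1),
    j.choose s * (if s ≤ k then (d + i + j - 1 - k - s).choose (k - s) else 0)

/-- `f_d(i,j,x) = ∑_{k=0}^{d-1} C_{d-1-k}·(1-x)^k·x^{d-k}·innerSum`. -/
noncomputable def fdij (d i j : ℕ) : Polynomial ℤ :=
  ∑ k ∈ Finset.range d,
    C ((catalan (d - 1 - k) * innerSum d i j k : ℕ) : ℤ) * (1 - X) ^ k * X ^ (d - k)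

theorem Finset.sum_range_succ_choose_smul {M : Type*} [AddCommMonoid M] (n : ℕ) (f : ℕ → M) :
    ∑ s ∈ range (n + 2), (n + 1).choose s • f s
      = ∑ s ∈ range (n + 1), n.choose s • (f s + f (s + 1)) := by
  have hshift : ∑ s ∈ range (n + 1), n.choose (s + 1) • f (s + 1) + (n + 1).choose 0 • f 0
      = ∑ s ∈ range (n + 1), n.choose s • f s := by
    have h := sum_range_succ' (fun s => n.choose s • f s) (n + 1)
    rw [Nat.choose_zero_right] at h ⊢
    rw [← h, sum_range_succ, Nat.choose_succ_self, zero_smul, add_zero]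
  rw [sum_range_succ']
  simp only [Nat.choose_succ_succ, add_smul, sum_add_distrib, smul_add]
  rw [add_assoc, hshift, add_comm]

theorem Finset.sum_range_succ_eq_sub_of_succ {G : Type*} [AddCommGroup G] {a b : ℕ → G}
    (c : ℕ → G) {n : ℕ} (h0 : a 0 = b 0) (hsucc : ∀ k < n, a (k + 1) = b (k + 1) - c k) :
    ∑ k ∈ range (n + 1), a k = ∑ k ∈ range (n + 1), b k - ∑ k ∈ range n, c k := by
  rw [sum_range_succ', sum_range_succ' b, h0,
    sum_congr rfl fun k hk => hsucc k (mem_range.1 hk), sum_sub_distrib]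
  abel

-- Without the `if`, truncated subtraction would give `binom(n - s, 0) = 1` for `k < s`.
def shiftedChoose (n k s : ℕ) : ℕ := if s ≤ k then (n - s).choose (k - s) else 0

lemma shiftedChoose_succ_succ_succ (n k s : ℕ) :
    shiftedChoose (n + 1) (k + 1) (s + 1) = shiftedChoose n k s := by
  simp [shiftedChoose]

lemma shiftedChoose_succ_succ {n s : ℕ} (k : ℕ) (hs : s ≤ n) :
    shiftedChoose (n + 1) (k + 1) s = shiftedChoose n (k + 1) s + shiftedChoose n k s := by
  unfold shiftedChoose
  rcases lt_trichotomy s (k + 1) with h | rfl | h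
  · rw [if_pos h.le, if_pos h.le, if_pos (Nat.le_of_lt_succ h), Nat.sub_add_comm hs,
      Nat.sub_add_comm (Nat.le_of_lt_succ h), Nat.choose_succ_succ', add_comm]
  · simp
  · simp [show ¬ s ≤ k + 1 by omega, show ¬ s ≤ k by omega]

lemma innerSum_eq_sum_shiftedChoose (d i j k : ℕ) :
    innerSum d i j k
      = ∑ s ∈ range (j + 1), j.choose s * shiftedChoose (d + i + j - 1 - k) k s := by
  simp only [innerSum, shiftedChoose, Nat.sub_sub]

lemma innerSum_zero_right (d i j : ℕ) : innerSum d i j 0 = 1 := by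
  simp [innerSum]

lemma innerSum_succ_succ {d K : ℕ} (i J : ℕ) (hd : K + 2 ≤ d) :
    innerSum d i (J + 1) (K + 1) = innerSum d i J (K + 1) + 2 * innerSum (d - 1) i J K := by
  set N := d + i + J - 1 - (K + 1)
  have hN : d + i + (J + 1) - 1 - (K + 1) = N + 1 := by omega
  have hN' : d - 1 + i + J - 1 - K = N := by omega
  simp only [innerSum_eq_sum_shiftedChoose, hN, hN', ← smul_eq_mul (Nat.choose _ _),
    sum_range_succ_choose_smul, mul_sum, ← sum_add_distrib]
  refine sum_congr rfl fun s hs => ?_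
  rw [shiftedChoose_succ_succ_succ, shiftedChoose_succ_succ K (by simp at hs; omega)]
  simp only [smul_eq_mul]
  ring

noncomputable def fdijTerm (d i j k : ℕ) : ℤ[X] :=
  C ((catalan (d - 1 - k) * innerSum d i j k : ℕ) : ℤ) * (1 - X) ^ k * X ^ (d - k)

lemma fdij_eq_sum_fdijTerm (d i j : ℕ) : fdij d i j = ∑ k ∈ range d, fdijTerm d i j k := rfl

lemma fdijTerm_zero_right (d i J : ℕ) : fdijTerm d i (J + 1) 0 = fdijTerm d i J 0 := by
  simp only [fdijTerm, innerSum_zero_right]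

lemma fdijTerm_succ_succ {d k : ℕ} (i J : ℕ) (hk : k + 2 ≤ d) :
    fdijTerm d i (J + 1) (k + 1)
      = fdijTerm d i J (k + 1) - 2 * (X - 1) * fdijTerm (d - 1) i J k := by
  have hcat : d - 1 - 1 - k = d - 1 - (k + 1) := by omega
  have hpow : d - 1 - k = d - (k + 1) := by omega
  rw [fdijTerm, fdijTerm, fdijTerm, innerSum_succ_succ i J hk, hcat, hpow]
  simp only [Nat.cast_mul, Nat.cast_add, Nat.cast_ofNat, map_mul, map_add, map_ofNat]
  ring

/-- The recursion `f_d(i,j,x) = f_d(i,j-1,x) - 2(x-1)·f_{d-1}(i,j-1,x)`. -/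
theorem stmt3 (d i j : ℕ) (hd : 2 ≤ d) (hj : 1 ≤ j) :
    fdij d i j = fdij d i (j - 1) - 2 * (X - 1) * fdij (d - 1) i (j - 1) := by
  obtain ⟨J, rfl⟩ := Nat.exists_eq_add_of_le' hj
  obtain ⟨D, rfl⟩ := Nat.exists_eq_add_of_le' hd
  rw [Nat.add_sub_cancel, fdij_eq_sum_fdijTerm, fdij_eq_sum_fdijTerm, fdij_eq_sum_fdijTerm,
    mul_sum]
  exact sum_range_succ_eq_sub_of_succ _ (fdijTerm_zero_right _ i J)
    fun k hk => fdijTerm_succ_succ i J (by omega)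
end

section
/- Define P_n(t) for n ≥ 1 implicitly by g_{n-1}(t) = (1-t)^n + t·P_n(t), where g_m(t) = ∑_k C_{m-k}·binom(m-k,k)·(t-1)^k. Then t divides the polynomial g_{n-1}(t) - (1-t)^n in ℤ[t] (so P_n(t) is a well-defined polynomial), and the polynomials P_n satisfy the recursion P_k(t) = (1-t)^{k-1} + ∑_{i=1}^{k-1} ( (1-t)^i·P_{k-i}(t) + t·P_i(t)·P_{k-i}(t) ) for all k ≥ 1. -/
/-!
Write `T = t - 1`, so that `g_m = ∑_{a+b=m} C_a binom(a,b) T^b`. Segner's recursion for the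
Catalan numbers combined with Vandermonde's identity turns the self-convolution into
`G_{N+1} := ∑_{i+j=N} g_i g_j = ∑_{p+k=N} C_{p+1} binom(p,k) T^k`, and Pascal's rule then gives
`g_{m+1} = G_{m+1} + T G_m` (with `G_0 = 0`). This is the coefficient form of the functional
equation `g = 1 + z (1 + T z) g²` for the generating function `g(z) = ∑ g_m z^m`.
At `t = 0` it gives `g_m(0) = 1`, which is the divisibility. Summed against powers of `1 - t`
it gives `∑_{j ≤ m} (1-t)^{m-j} g_j = (1-t)^m + G_m`, which is the recursion for the `P_n`
multiplied by `t`.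
-/

open Polynomial Finset

/-- The toric g-polynomial of the m-cube. -/
noncomputable def gCube (m : ℕ) : Polynomial ℤ :=
  ∑ k ∈ Finset.range (m / 2 + 1),
    C ((catalan (m - k) * (m - k).choose k : ℕ) : ℤ) * (X - 1) ^ k

/-- `P_n(t) := (g_{n-1}(t) - (1-t)^n)/t`, taken via division by the monic polynomial `X`. -/
noncomputable def Pden (n : ℕ) : Polynomial ℤ :=
  (gCube (n - 1) - (1 - X) ^ n) /ₘ X

section DiagSum

variable {R : Type*} [CommSemiring R]

/-- The coefficient of `z ^ m` in `∑ f a b z ^ (a + b) t ^ b`. -/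
def diagSum (f : ℕ → ℕ → ℕ) (t : R) (m : ℕ) : R :=
  ∑ q ∈ antidiagonal m, (f q.1 q.2 : R) * t ^ q.2

theorem diagSum_add (f g : ℕ → ℕ → ℕ) (t : R) (m : ℕ) :
    diagSum (fun a b => f a b + g a b) t m = diagSum f t m + diagSum g t m := by
  simp only [diagSum, Nat.cast_add, add_mul, sum_add_distrib]

theorem diagSum_succ (f : ℕ → ℕ → ℕ) (t : R) (m : ℕ) :
    diagSum f t (m + 1) = f (m + 1) 0 + t * diagSum (fun a b => f a (b + 1)) t m := by
  simp only [diagSum, Nat.sum_antidiagonal_succ', mul_sum, pow_zero, mul_one, pow_succ]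
  congr 1
  exact sum_congr rfl fun q _ => by ring

theorem diagSum_succ_of_eq_zero (f : ℕ → ℕ → ℕ) (t : R) (m : ℕ) (hf : f 0 (m + 1) = 0) :
    diagSum f t (m + 1) = diagSum (fun a b => f (a + 1) b) t m := by
  simp [diagSum, Nat.sum_antidiagonal_succ, hf]

theorem sum_antidiagonal_diagSum_mul_diagSum (f h : ℕ → ℕ → ℕ) (t : R) (N : ℕ) :
    ∑ p ∈ antidiagonal N, diagSum f t p.1 * diagSum h t p.2 =
      diagSum (fun p k => ∑ a ∈ antidiagonal p, ∑ b ∈ antidiagonal k, f a.1 b.1 * h a.2 b.2)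
        t N := by
  simp only [diagSum, sum_mul_sum, ← sum_product']
  simp only [push_cast, sum_mul, sum_sigma']
  -- transposing the matrix (a₁ b₁; a₂ b₂) is an involution of the index set
  let transpose : (_ : ℕ × ℕ) × (ℕ × ℕ) × (ℕ × ℕ) → (_ : ℕ × ℕ) × (ℕ × ℕ) × (ℕ × ℕ) :=
    fun x => ⟨(x.2.1.1 + x.2.2.1, x.2.1.2 + x.2.2.2), (x.2.1.1, x.2.2.1), (x.2.1.2, x.2.2.2)⟩
  refine sum_nbij' transpose transpose ?_ ?_ ?_ ?_ ?_ <;>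
    rintro ⟨⟨i, j⟩, ⟨a₁, b₁⟩, ⟨a₂, b₂⟩⟩ hx <;>
    simp only [mem_sigma, mem_product, HasAntidiagonal.mem_antidiagonal, Sigma.mk.injEq,
      Prod.mk.injEq, heq_eq_eq, and_true, transpose] at hx ⊢
  iterate 4 omega
  ring

end DiagSum

theorem catalan_succ_mul_choose (p k : ℕ) :
    catalan (p + 1) * p.choose k = ∑ a ∈ antidiagonal p, ∑ b ∈ antidiagonal k,
      catalan a.1 * a.1.choose b.1 * (catalan a.2 * a.2.choose b.2) := by
  rw [catalan_succ', sum_mul]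
  refine sum_congr rfl fun a ha => ?_
  rw [← (mem_antidiagonal.mp ha), Nat.add_choose_eq, mul_sum]
  exact sum_congr rfl fun b _ => by ring

theorem gCube_eq_diagSum (m : ℕ) :
    gCube m = diagSum (fun a b => catalan a * a.choose b) (X - 1) m := by
  rw [diagSum, ← Nat.sum_antidiagonal_swap, Nat.sum_antidiagonal_eq_sum_range_succ_mk, gCube]
  simp only [Prod.swap_prod_mk, map_natCast]
  refine sum_subset (range_subset_range.mpr (by omega)) fun k hk hk' => ?_
  rw [mem_range] at hk hk'
  rw [Nat.choose_eq_zero_of_lt (by omega), mul_zero, Nat.cast_zero, zero_mul]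

theorem gCube_zero : gCube 0 = 1 := by
  simp [gCube_eq_diagSum, diagSum]

theorem gCube_one : gCube 1 = 1 := by
  simp [gCube_eq_diagSum, diagSum, Nat.sum_antidiagonal_succ]

noncomputable def gConv (K : ℕ) : ℤ[X] :=
  ∑ j ∈ range K, gCube j * gCube (K - 1 - j)

theorem gConv_succ_eq_diagSum (N : ℕ) :
    gConv (N + 1) = diagSum (fun p k => catalan (p + 1) * p.choose k) (X - 1) N := by
  rw [gConv, add_tsub_cancel_right, ← Nat.sum_antidiagonal_eq_sum_range_succ
    (fun i j => gCube i * gCube j)]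
  simp only [gCube_eq_diagSum, sum_antidiagonal_diagSum_mul_diagSum, catalan_succ_mul_choose]

theorem gCube_succ (K : ℕ) : gCube (K + 1) = gConv (K + 1) + (X - 1) * gConv K := by
  rcases K with _ | N
  · simp [gConv, gCube_zero, gCube_one]
  rw [gCube_eq_diagSum, gConv_succ_eq_diagSum, gConv_succ_eq_diagSum,
    diagSum_succ_of_eq_zero _ _ _ (by simp), diagSum_succ, diagSum_succ]
  simp only [Nat.choose_succ_succ', mul_add, diagSum_add, Nat.choose_zero_right]
  ring

theorem sum_range_one_sub_X_pow_mul_gCube (K : ℕ) :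
    ∑ j ∈ range (K + 1), (1 - X) ^ (K - j) * gCube j = (1 - X) ^ K + gConv K := by
  induction K with
  | zero => simp [gCube_zero, gConv]
  | succ K ih =>
    have hshift : ∑ j ∈ range (K + 1), (1 - X : ℤ[X]) ^ (K + 1 - j) * gCube j =
        (1 - X) * ∑ j ∈ range (K + 1), (1 - X) ^ (K - j) * gCube j := by
      rw [mul_sum]
      refine sum_congr rfl fun j hj => ?_
      rw [Nat.sub_add_comm (mem_range_succ_iff.mp hj), pow_succ]
      ring
    rw [sum_range_succ, hshift, ih, Nat.sub_self, gCube_succ]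
    ring

theorem gCube_eval_zero (m : ℕ) : (gCube m).eval 0 = 1 := by
  induction m using Nat.strong_induction_on with
  | _ m ih =>
    have hconv : ∀ K ≤ m, (gConv K).eval 0 = K := by
      intro K hK
      have hterm : ∀ j ∈ range K, (gCube j * gCube (K - 1 - j)).eval 0 = 1 := fun j hj => by
        have hj := mem_range.mp hj
        rw [eval_mul, ih j (by omega), ih (K - 1 - j) (by omega), mul_one]
      rw [gConv, eval_finsetSum, sum_congr rfl hterm, sum_const, card_range, nsmul_one]
    rcases m with _ | K
    · simp [gCube_zero]
    · rw [gCube_succ, eval_add, eval_mul, hconv _ le_rfl, hconv _ (by omega)]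
      simp

theorem X_dvd_gCube_sub (n : ℕ) : (X : ℤ[X]) ∣ gCube (n - 1) - (1 - X) ^ n := by
  simp [X_dvd_iff, coeff_zero_eq_eval_zero, gCube_eval_zero]

theorem X_mul_Pden (n : ℕ) : X * Pden n = gCube (n - 1) - (1 - X) ^ n := by
  have h := modByMonic_add_div (gCube (n - 1) - (1 - X) ^ n) X
  rwa [(modByMonic_eq_zero_iff_dvd monic_X).mpr (X_dvd_gCube_sub n), zero_add] at h

theorem Pden_succ (K : ℕ) :
    Pden (K + 1) = (1 - X) ^ K +
      ∑ i ∈ Icc 1 K, ((1 - X) ^ i * Pden (K + 1 - i) + X * Pden i * Pden (K + 1 - i)) := by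
  apply mul_left_cancel₀ (X_ne_zero (R := ℤ))
  have hterm : ∀ j, X * ((1 - X) ^ (1 + j) * Pden (K + 1 - (1 + j)) +
      X * Pden (1 + j) * Pden (K + 1 - (1 + j))) =
        gCube j * gCube (K - 1 - j) - (1 - X) ^ (K - j) * gCube j := by
    intro j
    have h₁ := X_mul_Pden (1 + j)
    have h₂ := X_mul_Pden (K - j)
    rw [show K - j - 1 = K - 1 - j by omega] at h₂
    rw [add_tsub_cancel_left] at h₁
    rw [show K + 1 - (1 + j) = K - j by omega]
    linear_combination ((1 - X) ^ (1 + j) + X * Pden (1 + j)) * h₂ +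
      (gCube (K - 1 - j) - (1 - X) ^ (K - j)) * h₁
  have hsum := sum_range_one_sub_X_pow_mul_gCube K
  rw [sum_range_succ, Nat.sub_self, pow_zero, one_mul] at hsum
  rw [X_mul_Pden, mul_add, mul_sum, ← Ico_add_one_right_eq_Icc, sum_Ico_eq_sum_range,
    add_tsub_cancel_right, sum_congr rfl fun j _ => hterm j, sum_sub_distrib, ← gConv]
  linear_combination hsum

/-- `t` divides `g_{n-1}(t) - (1-t)^n`, so `P_n` is a well-defined polynomial, and the
polynomials `P_n` satisfy the Denise–Simion recursion. -/
theorem stmt13 :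
    (∀ n : ℕ, 1 ≤ n → (X : Polynomial ℤ) ∣ (gCube (n - 1) - (1 - X) ^ n)) ∧
      (∀ k : ℕ, 1 ≤ k →
        Pden k = (1 - X) ^ (k - 1) +
          ∑ i ∈ Finset.Icc 1 (k - 1),
            ((1 - X) ^ i * Pden (k - i) + X * Pden i * Pden (k - i))) := by
  refine ⟨fun n _ => X_dvd_gCube_sub n, fun k hk => ?_⟩
  obtain ⟨K, rfl⟩ := Nat.exists_eq_add_of_le' hk
  simpa using Pden_succ K
end

section
/- Let M(n) be the set of colored Motzkin paths from (0,0) to (n,0) with steps NE=(1,1), SE=(1,-1), and horizontal (1,0), where a horizontal step at height 0 must be colored red, and a horizontal step at positive height may be colored red or blue. For a path p let s(p) be the number of occurrences of two consecutive steps of the form (NE, red), (blue, red), (blue, SE), or (NE, SE). Then ∑_{p ∈ M(n)} t^{s(p)} = ∑_{j≥0} (-1)^j·(1-t)^j·binom(n-j,j)·C_{n-j}, as polynomials in t. -/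
open Polynomial Finset
open scoped Classical

/-- A step of a colored Motzkin path: North-East, South-East, red horizontal, or
blue horizontal. -/
inductive MStep : Type
  | up | down | redH | blueH
  deriving DecidableEq

instance : Fintype MStep where
  elems := {MStep.up, MStep.down, MStep.redH, MStep.blueH}
  complete := fun x => by cases x <;> simp

/-- The vertical displacement of a step. -/
def MStep.val : MStep → ℤ
  | .up => 1
  | .down => -1
  | .redH => 0
  | .blueH => 0

/-- The height of the path `p` after its first `i` steps. -/
def ht {n : ℕ} (p : Fin n → MStep) (i : ℕ) : ℤ :=
  ∑ j : Fin n, if (j : ℕ) < i then (p j).val else 0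

/-- `p` is a valid colored Motzkin path from `(0,0)` to `(n,0)`: heights stay
nonnegative, the path ends at height `0`, and a horizontal step at height `0` must be
red (blue horizontal steps occur only at positive height). -/
def Valid {n : ℕ} (p : Fin n → MStep) : Prop :=
  (∀ i : ℕ, i ≤ n → 0 ≤ ht p i) ∧ ht p n = 0 ∧
    ∀ j : Fin n, p j = MStep.blueH → 0 < ht p (j : ℕ)

/-- The pairs of consecutive steps counted by the statistic `s`. -/
def GoodPair : MStep → MStep → Prop := fun a b =>
  (a = .up ∧ b = .redH) ∨ (a = .blueH ∧ b = .redH) ∨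
    (a = .blueH ∧ b = .down) ∨ (a = .up ∧ b = .down)

/-- `s(p)`: the number of occurrences of two consecutive steps of the form
`(NE,red)`, `(blue,red)`, `(blue,SE)` or `(NE,SE)`. -/
noncomputable def sOcc {n : ℕ} (p : Fin n → MStep) : ℕ :=
  (Finset.univ.filter
    (fun j : Fin n => ∃ h : (j : ℕ) + 1 < n, GoodPair (p j) (p ⟨(j : ℕ) + 1, h⟩))).card

/-!
Put `t = 1 + u`, so that `(-1)^j (1-t)^j = u^j` and `t ^ s(p)` is the sum of `u ^ #S` over the
sets `S` of good pairs of `p`. No step closes one good pair and opens another, so the pairs in `S`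
are disjoint, and contracting each of them to a single step, `(NE,red) ↦ NE`,
`(blue,red) ↦ blue`, `(blue,SE) ↦ SE`, `(NE,SE) ↦ red`, is a bijection from the `(p, S)` with
`#S = j` onto the paths of length `n - j` together with an arbitrary `j`-set of their steps.
Finally `|M(m)| = C_m`: the substitution `NE ↦ UU`, `red ↦ UD`, `blue ↦ DU`, `SE ↦ DD` maps `M(m)`
onto the Dyck words of semilength `m`.
-/

lemma List.ofFn_getD {α : Type*} (d : α) {m : ℕ} (l : List α) (h : l.length = m) :
    List.ofFn (fun i : Fin m => l.getD i d) = l := by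
  subst h
  exact List.ext_getElem (by simp) fun i _ hi => by simp

lemma List.countP_ofFn {α : Type*} {n : ℕ} (f : Fin n → α) (q : α → Bool) :
    (List.ofFn f).countP q = #{i | q (f i)} := by
  rw [Finset.card_filter]
  induction n with
  | zero => simp
  | succ n ih => rw [List.ofFn_succ, List.countP_cons, ih, Fin.sum_univ_succ]; simp; ring

lemma pow_eq_sum_range_mul_choose {R : Type*} [CommRing R] (x : R) {s N : ℕ} (hs : s < N) :
    x ^ s = ∑ k ∈ range N, (x - 1) ^ k * s.choose k := by
  conv_lhs => rw [← sub_add_cancel x 1, add_pow]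
  simp only [one_pow, mul_one]
  exact sum_subset (range_subset_range.2 hs) fun k _ hk => by
    rw [Nat.choose_eq_zero_of_lt (by simpa using hk), Nat.cast_zero, mul_zero]

namespace ColoredMotzkin

section Excursion

variable {α : Type*} (δ : α → ℤ) (needsPos : α → Prop)

def IsExcursion : ℤ → List α → Prop
  | h, [] => h = 0
  | h, a :: l => 0 ≤ h ∧ (needsPos a → 0 < h) ∧ IsExcursion (h + δ a) l

variable {δ needsPos}

lemma IsExcursion.nonneg {h : ℤ} {l : List α} (H : IsExcursion δ needsPos h l) : 0 ≤ h := by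
  cases l with
  | nil => exact H.ge
  | cons a l => exact H.1

lemma isExcursion_iff (l : List α) (h : ℤ) :
    IsExcursion δ needsPos h l ↔
      (∀ i ≤ l.length, 0 ≤ h + ((l.take i).map δ).sum) ∧ h + (l.map δ).sum = 0 ∧
        ∀ (k : ℕ) (hk : k < l.length), needsPos l[k] → 0 < h + ((l.take k).map δ).sum := by
  induction l generalizing h with
  | nil => simp [IsExcursion]; omega
  | cons a l ih =>
    simp only [← Nat.lt_succ_iff] at ih ⊢
    simp only [IsExcursion, ih, List.length_cons, List.map_cons, List.sum_cons,
      Nat.forall_lt_succ_left, Nat.forall_lt_succ_left', List.take_zero,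
      List.take_succ_cons, List.map_nil, List.sum_nil, add_zero, List.getElem_cons_zero,
      List.getElem_cons_succ, ← add_assoc]
    tauto

end Excursion

abbrev IsMotzkin : ℤ → List MStep → Prop := IsExcursion MStep.val (· = MStep.blueH)

lemma ht_eq_sum_take {n : ℕ} (p : Fin n → MStep) (i : ℕ) :
    ht p i = (((List.ofFn p).take i).map MStep.val).sum := by
  rw [List.map_take, List.map_ofFn, List.sum_take_ofFn, ht, Finset.sum_filter]
  rfl

lemma valid_iff_isMotzkin {n : ℕ} (p : Fin n → MStep) :
    Valid p ↔ IsMotzkin 0 (List.ofFn p) := by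
  simp only [IsMotzkin, isExcursion_iff, Valid, ht_eq_sum_take, zero_add, List.length_ofFn,
    List.getElem_ofFn, List.take_of_length_le (List.length_ofFn (f := p)).le, Fin.forall_iff]

section Catalan

open DyckStep

def _root_.DyckStep.val : DyckStep → ℤ
  | U => 1
  | D => -1

abbrev IsDyck : ℤ → List DyckStep → Prop := IsExcursion DyckStep.val fun _ => False

lemma sum_map_dyckStepVal (l : List DyckStep) :
    (l.map DyckStep.val).sum = (l.count U : ℤ) - l.count D := by
  induction l with
  | nil => simp
  | cons x l ih => cases x <;> simp [DyckStep.val, ih] <;> ring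

lemma isDyck_zero_iff (l : List DyckStep) :
    IsDyck 0 l ↔ l.count U = l.count D ∧ ∀ i, (l.take i).count D ≤ (l.take i).count U := by
  simp only [IsDyck, isExcursion_iff, zero_add, sum_map_dyckStepVal]
  constructor
  · rintro ⟨hpre, hend, -⟩
    refine ⟨by omega, fun i => ?_⟩
    rcases le_or_gt i l.length with hi | hi
    · have := hpre i hi; omega
    · rw [List.take_of_length_le hi.le]; omega
  · rintro ⟨hend, hpre⟩
    exact ⟨fun i _ => by have := hpre i; omega, by omega, fun _ _ h => h.elim⟩

/-- Reading each step as two Dyck steps doubles all heights. -/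
def _root_.MStep.toDyck : MStep → List DyckStep
  | .up => [U, U]
  | .redH => [U, D]
  | .blueH => [D, U]
  | .down => [D, D]

def ofDyckPair : DyckStep → DyckStep → MStep
  | U, U => .up
  | U, D => .redH
  | D, U => .blueH
  | D, D => .down

def ofDyck : List DyckStep → List MStep
  | x :: y :: l => ofDyckPair x y :: ofDyck l
  | _ => []

lemma ofDyck_flatMap_toDyck (l : List MStep) : ofDyck (l.flatMap MStep.toDyck) = l := by
  induction l with
  | nil => rfl
  | cons a l ih => cases a <;> simp [MStep.toDyck, ofDyck, ofDyckPair, ih]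

lemma flatMap_toDyck_ofDyck :
    ∀ l : List DyckStep, Even l.length → (ofDyck l).flatMap MStep.toDyck = l
  | [], _ => rfl
  | [_], h => by simp at h
  | x :: y :: l, h => by
    have := flatMap_toDyck_ofDyck l (by simpa [Nat.even_add_one] using h)
    cases x <;> cases y <;> simp [MStep.toDyck, ofDyck, ofDyckPair, this]

lemma length_flatMap_toDyck (l : List MStep) : (l.flatMap MStep.toDyck).length = 2 * l.length := by
  induction l with
  | nil => rfl
  | cons a l ih => cases a <;> simp [MStep.toDyck, ih] <;> ring

lemma isMotzkin_iff_isDyck (l : List MStep) (h : ℤ) :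
    IsMotzkin h l ↔ IsDyck (2 * h) (l.flatMap MStep.toDyck) := by
  induction l generalizing h with
  | nil => simp [IsExcursion]
  | cons a l ih =>
    cases a <;> simp [IsExcursion, MStep.toDyck, MStep.val, DyckStep.val, ih, mul_add, add_assoc]
    all_goals intro _ hl; have := hl.nonneg; omega

lemma isDyck_toDyck_of_valid {m : ℕ} {p : Fin m → MStep} (hp : Valid p) :
    IsDyck 0 ((List.ofFn p).flatMap MStep.toDyck) := by
  simpa using (isMotzkin_iff_isDyck _ 0).1 ((valid_iff_isMotzkin p).1 hp)

def dyckWordOfValid {m : ℕ} (p : Fin m → MStep) (hp : Valid p) : DyckWord where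
  toList := (List.ofFn p).flatMap MStep.toDyck
  count_U_eq_count_D := ((isDyck_zero_iff _).1 (isDyck_toDyck_of_valid hp)).1
  count_D_le_count_U := ((isDyck_zero_iff _).1 (isDyck_toDyck_of_valid hp)).2

lemma semilength_dyckWordOfValid {m : ℕ} (p : Fin m → MStep) (hp : Valid p) :
    (dyckWordOfValid p hp).semilength = m := by
  have : 2 * (dyckWordOfValid p hp).semilength = 2 * m := by
    rw [DyckWord.two_mul_semilength_eq_length]
    exact (length_flatMap_toDyck _).trans (by simp)
  omega

lemma even_length_toList (d : DyckWord) : Even d.toList.length :=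
  ⟨d.semilength, by rw [← d.two_mul_semilength_eq_length, two_mul]⟩

lemma isDyck_toList (d : DyckWord) : IsDyck 0 d.toList :=
  (isDyck_zero_iff _).2 ⟨d.count_U_eq_count_D, d.count_D_le_count_U⟩

theorem card_valid (m : ℕ) : #{p : Fin m → MStep | Valid p} = catalan m := by
  rw [← DyckWord.card_dyckWord_semilength_eq_catalan m, ← Finset.card_univ]
  have hofDyck (d : {d : DyckWord // d.semilength = m}) :
      (ofDyck d.1.toList).flatMap MStep.toDyck = d.1.toList :=
    flatMap_toDyck_ofDyck _ (even_length_toList d.1)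
  have hlen (d : {d : DyckWord // d.semilength = m}) : (ofDyck d.1.toList).length = m := by
    have := congrArg List.length (hofDyck d)
    rw [length_flatMap_toDyck, ← d.1.two_mul_semilength_eq_length, d.2] at this
    omega
  refine Finset.card_bij' (fun p hp => ⟨dyckWordOfValid p (Finset.mem_filter.1 hp).2,
      semilength_dyckWordOfValid p _⟩) (fun d _ i => (ofDyck d.1.toList).getD i .up)
    (fun _ _ => Finset.mem_univ _) (fun d _ => ?_) (fun p _ => ?_) (fun d _ => ?_)
  · rw [Finset.mem_filter, valid_iff_isMotzkin, List.ofFn_getD _ _ (hlen d),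
      ← mul_zero 2, isMotzkin_iff_isDyck, hofDyck]
    exact ⟨Finset.mem_univ _, isDyck_toList d.1⟩
  · funext i
    simp [dyckWordOfValid, ofDyck_flatMap_toDyck]
  · refine Subtype.ext (DyckWord.ext ?_)
    exact (congrArg _ (List.ofFn_getD _ _ (hlen d))).trans (hofDyck d)

end Catalan

/-- The good pair that `contract` merges into the step `a`. -/
def _root_.MStep.expand : MStep → MStep × MStep
  | .up => (.up, .redH)
  | .blueH => (.blueH, .redH)
  | .down => (.blueH, .down)
  | .redH => (.up, .down)

def contractPair : MStep → MStep → MStep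
  | .up, .redH => .up
  | .blueH, .redH => .blueH
  | .blueH, .down => .down
  | .up, .down => .redH
  | a, _ => a

lemma goodPair_expand (a : MStep) : GoodPair a.expand.1 a.expand.2 := by
  cases a <;> simp [MStep.expand, GoodPair]

lemma expand_contractPair {a b : MStep} (h : GoodPair a b) :
    (contractPair a b).expand = (a, b) := by
  rcases h with ⟨rfl, rfl⟩ | ⟨rfl, rfl⟩ | ⟨rfl, rfl⟩ | ⟨rfl, rfl⟩ <;> rfl

lemma not_goodPair_of_goodPair {a b c : MStep} (hab : GoodPair a b) : ¬GoodPair b c := by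
  unfold GoodPair at hab ⊢
  rcases hab with ⟨-, rfl⟩ | ⟨-, rfl⟩ | ⟨-, rfl⟩ | ⟨-, rfl⟩ <;> simp

/-- In a marked word, a mark on a letter pairs it with the following letter. -/
def expand : List (MStep × Bool) → List (MStep × Bool)
  | [] => []
  | (a, false) :: w => (a, false) :: expand w
  | (a, true) :: w => (a.expand.1, true) :: (a.expand.2, false) :: expand w

def contract : List (MStep × Bool) → List (MStep × Bool)
  | [] => []
  | (a, false) :: w => (a, false) :: contract w
  | [(_, true)] => []
  | (a, true) :: (b, _) :: w => (contractPair a b, true) :: contract w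

def MarksGood : List (MStep × Bool) → Prop
  | [] => True
  | [(_, m)] => m = false
  | (a, m) :: (b, n) :: w => (m = true → GoodPair a b) ∧ MarksGood ((b, n) :: w)

lemma MarksGood.tail {x : MStep × Bool} {w : List (MStep × Bool)} (h : MarksGood (x :: w)) :
    MarksGood w := by
  match w, h with
  | [], _ => trivial
  | _ :: _, h => exact h.2

lemma MarksGood.cons_false {a : MStep} {w : List (MStep × Bool)} (h : MarksGood w) :
    MarksGood ((a, false) :: w) := by
  match w, h with
  | [], _ => rfl
  | _ :: _, h => exact ⟨nofun, h⟩

lemma length_expand (w : List (MStep × Bool)) :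
    (expand w).length = w.length + w.countP (·.2) := by
  induction w with
  | nil => rfl
  | cons x w ih => obtain ⟨a, _ | _⟩ := x <;> simp [expand, ih] <;> omega

lemma countP_expand (w : List (MStep × Bool)) :
    (expand w).countP (·.2) = w.countP (·.2) := by
  induction w with
  | nil => rfl
  | cons x w ih => obtain ⟨a, _ | _⟩ := x <;> simp [expand, ih]

lemma marksGood_expand (w : List (MStep × Bool)) : MarksGood (expand w) := by
  induction w with
  | nil => trivial
  | cons x w ih =>
    obtain ⟨a, _ | _⟩ := x
    · exact ih.cons_false
    · exact ⟨fun _ => goodPair_expand a, ih.cons_false⟩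

lemma isMotzkin_expand (w : List (MStep × Bool)) (h : ℤ) :
    IsMotzkin h ((expand w).map Prod.fst) ↔ IsMotzkin h (w.map Prod.fst) := by
  induction w generalizing h with
  | nil => rfl
  | cons x w ih =>
    obtain ⟨a, _ | _⟩ := x
    · simp only [expand, List.map_cons, IsExcursion, ih]
    · cases a <;> simp [expand, MStep.expand, IsExcursion, MStep.val, ih]
      -- the `SE` step of `(blue, SE)` forces the positive height that the blue step needs
      case down =>
        exact fun h0 => ⟨fun hw => hw.2.2, fun hw => ⟨by linarith [hw.nonneg], h0, hw⟩⟩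
      all_goals intros; omega

lemma contract_expand (w : List (MStep × Bool)) : contract (expand w) = w := by
  induction w with
  | nil => rfl
  | cons x w ih => obtain ⟨a, _ | _⟩ := x <;> simp [expand, contract, ih]; cases a <;> rfl

lemma expand_contract : ∀ w : List (MStep × Bool), MarksGood w → expand (contract w) = w
  | [], _ => rfl
  | (a, false) :: w, h => by simp [contract, expand, expand_contract w h.tail]
  | [(a, true)], h => by simp [MarksGood] at h
  | (a, true) :: (b, n) :: w, h => by
    have hab : GoodPair a b := h.1 rfl
    have hn : n = false := by
      match w, h with
      | [], h => exact h.2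
      | _ :: _, h => exact Bool.eq_false_iff.2 fun hn => not_goodPair_of_goodPair hab (h.2.1 hn)
    simp [contract, expand, expand_contractPair hab, expand_contract w h.tail.tail, hn]

lemma countP_contract {w : List (MStep × Bool)} (h : MarksGood w) :
    (contract w).countP (·.2) = w.countP (·.2) := by
  conv_rhs => rw [← expand_contract w h, countP_expand]

lemma length_contract {w : List (MStep × Bool)} (h : MarksGood w) :
    (contract w).length + w.countP (·.2) = w.length := by
  conv_rhs => rw [← expand_contract w h, length_expand, countP_contract h]

lemma isMotzkin_contract {w : List (MStep × Bool)} (hw : MarksGood w) (h : ℤ) :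
    IsMotzkin h ((contract w).map Prod.fst) ↔ IsMotzkin h (w.map Prod.fst) := by
  conv_rhs => rw [← expand_contract w hw, isMotzkin_expand]

lemma marksGood_iff_getElem (w : List (MStep × Bool)) :
    MarksGood w ↔ ∀ (k : ℕ) (hk : k < w.length), w[k].2 = true →
      ∃ hk' : k + 1 < w.length, GoodPair w[k].1 w[k + 1].1 := by
  induction w with
  | nil => simp [MarksGood]
  | cons x w ih =>
    obtain ⟨a, m⟩ := x
    cases w with
    | nil => simp [MarksGood]
    | cons y w =>
      obtain ⟨b, n⟩ := y
      simp only [MarksGood, ih, List.length_cons, Nat.forall_lt_succ_left', List.getElem_cons_zero,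
        List.getElem_cons_succ, Nat.add_lt_add_iff_right, Nat.zero_lt_succ, exists_true_left]

section MarkedPaths

noncomputable def goodPositions {n : ℕ} (p : Fin n → MStep) : Finset (Fin n) :=
  {j | ∃ h : (j : ℕ) + 1 < n, GoodPair (p j) (p ⟨(j : ℕ) + 1, h⟩)}

lemma sOcc_eq_card_goodPositions {n : ℕ} (p : Fin n → MStep) : sOcc p = #(goodPositions p) :=
  rfl

def toMarked {n : ℕ} (p : Fin n → MStep) (S : Finset (Fin n)) : List (MStep × Bool) :=
  List.ofFn fun i => (p i, decide (i ∈ S))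

def pathOf (m : ℕ) (w : List (MStep × Bool)) : Fin m → MStep :=
  fun i => (w.getD i (.up, false)).1

def marksOf (m : ℕ) (w : List (MStep × Bool)) : Finset (Fin m) :=
  {i | (w.getD i (.up, false)).2}

variable {n m : ℕ}

@[simp] lemma length_toMarked (p : Fin n → MStep) (S : Finset (Fin n)) :
    (toMarked p S).length = n := by
  simp [toMarked]

@[simp] lemma map_fst_toMarked (p : Fin n → MStep) (S : Finset (Fin n)) :
    (toMarked p S).map Prod.fst = List.ofFn p := by
  simp [toMarked, Function.comp_def]

@[simp] lemma countP_toMarked (p : Fin n → MStep) (S : Finset (Fin n)) :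
    (toMarked p S).countP (·.2) = #S := by
  simp [toMarked, List.countP_ofFn]

@[simp] lemma pathOf_toMarked (p : Fin n → MStep) (S : Finset (Fin n)) :
    pathOf n (toMarked p S) = p := by
  funext i
  simp [pathOf, toMarked]

@[simp] lemma marksOf_toMarked (p : Fin n → MStep) (S : Finset (Fin n)) :
    marksOf n (toMarked p S) = S := by
  ext i
  simp [marksOf, toMarked]

lemma toMarked_pathOf_marksOf {w : List (MStep × Bool)} (hw : w.length = m) :
    toMarked (pathOf m w) (marksOf m w) = w := by
  conv_rhs => rw [← List.ofFn_getD (.up, false) w hw]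
  simp [toMarked, pathOf, marksOf]

lemma marksGood_toMarked_iff (p : Fin n → MStep) (S : Finset (Fin n)) :
    MarksGood (toMarked p S) ↔ S ⊆ goodPositions p := by
  simp [marksGood_iff_getElem, toMarked, Finset.subset_iff, goodPositions, Fin.forall_iff]

lemma valid_pathOf_iff {w : List (MStep × Bool)} (hw : w.length = m) :
    Valid (pathOf m w) ↔ IsMotzkin 0 (w.map Prod.fst) := by
  conv_rhs => rw [← toMarked_pathOf_marksOf hw, map_fst_toMarked]
  exact valid_iff_isMotzkin _

lemma card_marksOf {w : List (MStep × Bool)} (hw : w.length = m) :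
    #(marksOf m w) = w.countP (·.2) := by
  conv_rhs => rw [← toMarked_pathOf_marksOf hw, countP_toMarked]

lemma length_contract_toMarked {j : ℕ} {p : Fin (m + j) → MStep} {S : Finset (Fin (m + j))}
    (hS : MarksGood (toMarked p S)) (hcard : #S = j) : (contract (toMarked p S)).length = m := by
  have := length_contract hS
  rw [countP_toMarked, length_toMarked, hcard] at this
  omega

lemma length_expand_toMarked {j : ℕ} (q : Fin m → MStep) {T : Finset (Fin m)} (hcard : #T = j) :
    (expand (toMarked q T)).length = m + j := by
  rw [length_expand, countP_toMarked, length_toMarked, hcard]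

lemma mem_sigma_powersetCard_goodPositions_iff {j : ℕ} (p : Fin n → MStep)
    (S : Finset (Fin n)) :
    ⟨p, S⟩ ∈ ({p : Fin n → MStep | Valid p} : Finset _).sigma
        (fun p => (goodPositions p).powersetCard j) ↔
      Valid p ∧ MarksGood (toMarked p S) ∧ #S = j := by
  simp [marksGood_toMarked_iff]

lemma mem_product_powersetCard_iff {j : ℕ} (q : Fin m → MStep) (T : Finset (Fin m)) :
    (q, T) ∈ ({q : Fin m → MStep | Valid q} : Finset _) ×ˢ powersetCard j (univ : Finset (Fin m)) ↔
      Valid q ∧ #T = j := by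
  simp

end MarkedPaths

theorem card_sigma_powersetCard_goodPositions (m j : ℕ) :
    #(({p : Fin (m + j) → MStep | Valid p} : Finset _).sigma
        fun p => (goodPositions p).powersetCard j) =
      #(({q : Fin m → MStep | Valid q} : Finset _) ×ˢ powersetCard j (univ : Finset (Fin m))) := by
  refine Finset.card_nbij'
    (fun x => (pathOf m (contract (toMarked x.1 x.2)), marksOf m (contract (toMarked x.1 x.2))))
    (fun y => ⟨pathOf (m + j) (expand (toMarked y.1 y.2)),
      marksOf (m + j) (expand (toMarked y.1 y.2))⟩) ?_ ?_ ?_ ?_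
  · rintro ⟨p, S⟩ hx
    obtain ⟨hp, hgood, hcard⟩ := (mem_sigma_powersetCard_goodPositions_iff p S).1 hx
    have hlen := length_contract_toMarked hgood hcard
    rw [mem_coe, mem_product_powersetCard_iff, valid_pathOf_iff hlen, isMotzkin_contract hgood,
      map_fst_toMarked, ← valid_iff_isMotzkin, card_marksOf hlen, countP_contract hgood,
      countP_toMarked]
    exact ⟨hp, hcard⟩
  · rintro ⟨q, T⟩ hy
    obtain ⟨hq, hcard⟩ := (mem_product_powersetCard_iff q T).1 hy
    have hlen := length_expand_toMarked q hcard
    rw [mem_coe, mem_sigma_powersetCard_goodPositions_iff, toMarked_pathOf_marksOf hlen,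
      valid_pathOf_iff hlen, isMotzkin_expand, map_fst_toMarked, ← valid_iff_isMotzkin,
      card_marksOf hlen, countP_expand, countP_toMarked]
    exact ⟨hq, marksGood_expand _, hcard⟩
  · rintro ⟨p, S⟩ hx
    obtain ⟨-, hgood, hcard⟩ := (mem_sigma_powersetCard_goodPositions_iff p S).1 hx
    dsimp only
    rw [toMarked_pathOf_marksOf (length_contract_toMarked hgood hcard), expand_contract _ hgood,
      pathOf_toMarked, marksOf_toMarked]
  · rintro ⟨q, T⟩ hy
    dsimp only
    have hlen := length_expand_toMarked q ((mem_product_powersetCard_iff q T).1 hy).2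
    rw [toMarked_pathOf_marksOf hlen, contract_expand, pathOf_toMarked, marksOf_toMarked]

theorem sum_choose_sOcc {n j : ℕ} (hj : j ≤ n) :
    ∑ p ∈ {p : Fin n → MStep | Valid p}, (sOcc p).choose j =
      (n - j).choose j * catalan (n - j) := by
  obtain ⟨m, rfl⟩ : ∃ m, n = m + j := ⟨n - j, by omega⟩
  simp only [sOcc_eq_card_goodPositions, ← card_powersetCard, Nat.add_sub_cancel]
  rw [← card_sigma, card_sigma_powersetCard_goodPositions, card_product, card_valid,
    card_powersetCard, card_univ, Fintype.card_fin, mul_comm]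

lemma sOcc_le {n : ℕ} (p : Fin n → MStep) : sOcc p ≤ n :=
  (card_le_univ _).trans_eq (Fintype.card_fin n)

end ColoredMotzkin

/-- Denise–Simion: `∑_{p ∈ M(n)} t^{s(p)} = ∑_j (-1)^j·(1-t)^j·binom(n-j,j)·C_{n-j}`. -/
theorem stmt14 (n : ℕ) :
    ∑ p ∈ Finset.univ.filter (fun p : Fin n → MStep => Valid p),
        (X : Polynomial ℤ) ^ sOcc p =
      ∑ j ∈ Finset.range (n / 2 + 1),
        (-1 : Polynomial ℤ) ^ j * (1 - X) ^ j *
          C (((n - j).choose j * catalan (n - j) : ℕ) : ℤ) := by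
  have hexpand (p : Fin n → MStep) :=
    pow_eq_sum_range_mul_choose (X : ℤ[X]) (Nat.lt_succ_of_le (ColoredMotzkin.sOcc_le p))
  calc _ = ∑ k ∈ range (n + 1), (X - 1) ^ k *
          ((∑ p ∈ {p : Fin n → MStep | Valid p}, (sOcc p).choose k : ℕ) : ℤ[X]) := by
        simp_rw [hexpand, Nat.cast_sum, mul_sum]
        exact sum_comm
    _ = ∑ k ∈ range (n + 1), (X - 1) ^ k * (((n - k).choose k * catalan (n - k) : ℕ) : ℤ[X]) :=
        sum_congr rfl fun k hk => by
          rw [ColoredMotzkin.sum_choose_sOcc (Nat.lt_succ_iff.1 (mem_range.1 hk))]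
    _ = _ := by
        refine (sum_subset (range_subset_range.2 (by omega)) fun k hk hk' => ?_).symm.trans
          (sum_congr rfl fun k _ => ?_)
        · simp only [mem_range] at hk hk'
          rw [Nat.choose_eq_zero_of_lt (by omega), zero_mul, Nat.cast_zero, mul_zero]
        · rw [← mul_pow, neg_one_mul, neg_sub, C_eq_natCast]
end
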